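/- Let t_m > 0, let A : ℝ → Matrix (n × n) ℝ and δ : ℝ → ℝⁿ be continuous on [0, t_m], and let Δx : ℝ → ℝⁿ be differentiable on [0, t_m] with Δx(0) = 0 and Δx'(t) = A(t)·Δx(t) − δ(t) for t ∈ [0, t_m]. Let A₀ = A(0), and suppose there are an invertible n×n real matrix P and a diagonal n×n real matrix Σ with diagonal entries λ₁ ≥ λ₂ ≥ … ≥ λₙ such that A₀ = P·Σ·P⁻¹. Let h_max ≥ 0 satisfy |(P⁻¹·(A(t) − A₀)·P)_{ij}| ≤ h_max for all t ∈ [0, t_m] and all i, j, and let δ_max ≥ 0 satisfy |(P⁻¹·δ(t))_i| ≤ δ_max for all t ∈ [0, t_m] and all i. Assume λ₁ + n·h_max ≠ 0. Then for all t ∈ [0, t_m], ‖Δx(t)‖_∞ ≤ ‖P‖_∞ · (δ_max / (λ₁ + n·h_max)) · (e^{(λ₁ + n·h_max)·t} − 1), where ‖Δx(t)‖_∞ = max_i |Δx(t)_i| and ‖P‖_∞ is the operator norm of P induced by the ∞-norm on ℝⁿ (the maximum absolute row sum of P). -/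

import Mathlib

/-!
Put `y = P⁻¹ Δx`. Then `y' = Σ y + (B y - g)` with `B = P⁻¹ (A - A₀) P` and `g = P⁻¹ δ`, so each
coordinate solves a scalar equation `yᵢ' = λᵢ yᵢ + fᵢ` with `|fᵢ| ≤ n h_max ‖y‖ + δ_max`.
Duhamel's formula `yᵢ(t) = ∫₀ᵗ e^{λᵢ (t - s)} fᵢ(s) ds` together with `λᵢ ≤ λ₁` bounds `‖y(t)‖` by
`W(t) = ∫₀ᵗ e^{λ₁ (t - s)} (n h_max ‖y(s)‖ + δ_max) ds`, and `W' = λ₁ W + n h_max ‖y‖ + δ_max`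
`≤ (λ₁ + n h_max) W + δ_max` is a differential inequality to which Grönwall's lemma applies.
Finally `‖Δx‖ = ‖P y‖ ≤ ‖P‖_∞ ‖y‖`.
-/

open Matrix Set Real intervalIntegral

theorem integral_exp_mul_sub_mul (L a t : ℝ) (φ : ℝ → ℝ) :
    ∫ s in a..t, exp (L * (t - s)) * φ s = exp (L * t) * ∫ s in a..t, exp (-L * s) * φ s := by
  rw [← integral_const_mul]
  congr 1 with s
  rw [← mul_assoc, ← exp_add]
  ring_nf

theorem eq_integral_exp_mul_of_hasDerivWithinAt {y f : ℝ → ℝ} {μ a b t : ℝ}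
    (hy : ∀ s ∈ Icc a b, HasDerivWithinAt y (μ * y s + f s) (Icc a b) s)
    (hf : ContinuousOn f (Icc a b)) (hya : y a = 0) (ht : t ∈ Icc a b) :
    y t = ∫ s in a..t, exp (μ * (t - s)) * f s := by
  have hsub : Icc a t ⊆ Icc a b := Icc_subset_Icc_right ht.2
  have hyc : ContinuousOn y (Icc a b) := fun s hs => (hy s hs).continuousWithinAt
  have hexp : Continuous fun s => exp (-μ * s) := by fun_prop
  have hFTC : ∫ s in a..t, exp (-μ * s) * f s = exp (-μ * t) * y t - exp (-μ * a) * y a := by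
    refine integral_eq_sub_of_hasDerivAt_of_le (f := fun s => exp (-μ * s) * y s) ht.1
      (hexp.continuousOn.mul (hyc.mono hsub)) (fun s hs => ?_)
      ((hexp.continuousOn.mul (hf.mono hsub)).intervalIntegrable_of_Icc ht.1)
    have hys := (hy s (hsub (Ioo_subset_Icc_self hs))).hasDerivAt
      (Icc_mem_nhds hs.1 (hs.2.trans_le ht.2))
    have hes : HasDerivAt (fun s => exp (-μ * s)) (exp (-μ * s) * -μ) s := by
      simpa using ((hasDerivAt_id s).const_mul (-μ)).exp
    exact (hes.fun_mul hys).congr_deriv (by ring)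
  rw [integral_exp_mul_sub_mul, hFTC, hya, mul_zero, sub_zero, ← mul_assoc, ← exp_add]
  simp

theorem abs_le_integral_exp_mul_of_hasDerivWithinAt {y f g : ℝ → ℝ} {μ L a b t : ℝ}
    (hy : ∀ s ∈ Icc a b, HasDerivWithinAt y (μ * y s + f s) (Icc a b) s)
    (hf : ContinuousOn f (Icc a b)) (hg : ContinuousOn g (Icc a b)) (hya : y a = 0)
    (hμL : μ ≤ L) (hfg : ∀ s ∈ Icc a b, |f s| ≤ g s) (ht : t ∈ Icc a b) :
    |y t| ≤ ∫ s in a..t, exp (L * (t - s)) * g s := by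
  have hsub : Icc a t ⊆ Icc a b := Icc_subset_Icc_right ht.2
  rw [eq_integral_exp_mul_of_hasDerivWithinAt hy hf hya ht]
  refine (abs_integral_le_integral_abs ht.1).trans (integral_mono_on ht.1 ?_ ?_ fun s hs => ?_)
  · exact (((Continuous.continuousOn (by fun_prop)).mul (hf.mono hsub)).intervalIntegrable_of_Icc
      ht.1).abs
  · exact ((Continuous.continuousOn (by fun_prop)).mul (hg.mono hsub)).intervalIntegrable_of_Icc
      ht.1
  · rw [abs_mul, abs_of_pos (exp_pos _)]
    have hexp : exp (μ * (t - s)) ≤ exp (L * (t - s)) :=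
      exp_le_exp.2 (mul_le_mul_of_nonneg_right hμL (sub_nonneg.2 hs.2))
    exact mul_le_mul hexp (hfg s (hsub hs)) (abs_nonneg _) (exp_pos _).le

theorem le_gronwallBound_of_le_integral_exp_mul {m : ℝ → ℝ} {L c ε a b : ℝ} (hc : 0 ≤ c)
    (hm : ContinuousOn m (Icc a b))
    (h : ∀ t ∈ Icc a b, m t ≤ ∫ s in a..t, exp (L * (t - s)) * (c * m s + ε)) :
    ∀ t ∈ Icc a b, m t ≤ gronwallBound 0 (L + c) ε (t - a) := by
  set φ : ℝ → ℝ := fun s => exp (-L * s) * (c * m s + ε)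
  set W : ℝ → ℝ := fun t => exp (L * t) * ∫ s in a..t, φ s
  have hφ : ContinuousOn φ (Icc a b) :=
    (Continuous.continuousOn (by fun_prop)).mul ((continuousOn_const.mul hm).add continuousOn_const)
  have hW : ∀ t ∈ Icc a b, HasDerivWithinAt W (L * W t + (c * m t + ε)) (Icc a b) t := by
    intro t ht
    have := Fact.mk ht
    have hI : HasDerivWithinAt (fun u => ∫ s in a..u, φ s) (φ t) (Icc a b) t :=
      integral_hasDerivWithinAt_right
        ((hφ.mono (uIcc_subset_Icc ⟨le_rfl, ht.1.trans ht.2⟩ ht)).intervalIntegrable)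
        (hφ.stronglyMeasurableAtFilter_nhdsWithin measurableSet_Icc t) (hφ t ht)
    have he : HasDerivWithinAt (fun u => exp (L * u)) (exp (L * t) * L) (Icc a b) t := by
      simpa using ((hasDerivAt_id t).const_mul L).exp.hasDerivWithinAt
    refine (he.fun_mul hI).congr_deriv ?_
    have hcancel : exp (L * t) * exp (-L * t) = 1 := by rw [← exp_add]; simp
    simp only [W, φ]
    linear_combination (c * m t + ε) * hcancel
  have hmW : ∀ t ∈ Icc a b, m t ≤ W t := fun t ht => (h t ht).trans_eq (integral_exp_mul_sub_mul ..)
  intro t ht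
  refine (hmW t ht).trans (le_gronwallBound_of_liminf_deriv_right_le
    (fun t ht => (hW t ht).continuousWithinAt)
    (fun x hx r hr => ((hW x (Ico_subset_Icc_self hx)).mono_of_mem_nhdsWithin
      (Icc_mem_nhdsGE_of_mem hx)).liminf_right_slope_le hr)
    (by simp [W]) (fun x hx => ?_) t ht)
  linarith [mul_le_mul_of_nonneg_left (hmW x (Ico_subset_Icc_self hx)) hc]

section

variable {ι κ : Type*} [Fintype ι]

theorem HasDerivWithinAt.const_mulVec [Fintype κ] (M : Matrix κ ι ℝ)
    {v : ℝ → ι → ℝ} {v' : ι → ℝ} {s : Set ℝ} {x : ℝ} (hv : HasDerivWithinAt v v' s x) :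
    HasDerivWithinAt (fun t => M *ᵥ v t) (M *ᵥ v') s x :=
  (LinearMap.toContinuousLinearMap (mulVecLin M)).hasFDerivAt.comp_hasDerivWithinAt x hv

theorem abs_mulVec_apply_le_sum_abs_mul_norm (M : Matrix κ ι ℝ) (v : ι → ℝ) (i : κ) :
    |(M *ᵥ v) i| ≤ (∑ j, |M i j|) * ‖v‖ := by
  rw [Finset.sum_mul]
  refine (Finset.abs_sum_le_sum_abs _ _).trans (Finset.sum_le_sum fun j _ => ?_)
  rw [abs_mul]
  exact mul_le_mul_of_nonneg_left (norm_le_pi_norm v j) (abs_nonneg _)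

theorem norm_mulVec_le_iSup_sum_abs_mul_norm [Fintype κ] (M : Matrix κ ι ℝ) (v : ι → ℝ) :
    ‖M *ᵥ v‖ ≤ (⨆ i, ∑ j, |M i j|) * ‖v‖ := by
  have hbdd : BddAbove (range fun i => ∑ j, |M i j|) := (finite_range _).bddAbove
  refine (pi_norm_le_iff_of_nonneg (mul_nonneg
    (Real.iSup_nonneg fun i => Finset.sum_nonneg fun j _ => abs_nonneg _) (norm_nonneg v))).2
    fun i => ?_
  exact (abs_mulVec_apply_le_sum_abs_mul_norm M v i).trans
    (mul_le_mul_of_nonneg_right (le_ciSup hbdd i) (norm_nonneg v))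

theorem abs_mulVec_apply_le_card_mul {M : Matrix κ ι ℝ} {h : ℝ} {i : κ} (hM : ∀ j, |M i j| ≤ h)
    (v : ι → ℝ) : |(M *ᵥ v) i| ≤ Fintype.card ι * h * ‖v‖ := by
  refine (abs_mulVec_apply_le_sum_abs_mul_norm M v i).trans
    (mul_le_mul_of_nonneg_right ?_ (norm_nonneg v))
  simpa using Finset.sum_le_sum fun j (_ : j ∈ Finset.univ) => hM j

theorem inv_mulVec_mulVec_eq_diagonal_add {R : Type*} [CommRing R] [DecidableEq ι]
    {P A A₀ : Matrix ι ι R} {lam : ι → R} (hP : IsUnit P.det) (hA₀ : A₀ = P * diagonal lam * P⁻¹)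
    (x : ι → R) :
    P⁻¹ *ᵥ (A *ᵥ x) = diagonal lam *ᵥ (P⁻¹ *ᵥ x) + (P⁻¹ * (A - A₀) * P) *ᵥ (P⁻¹ *ᵥ x) := by
  have hconj : P⁻¹ * A₀ * P = diagonal lam := by
    rw [hA₀, Matrix.mul_assoc, Matrix.mul_assoc, nonsing_inv_mul _ hP, Matrix.mul_one,
      ← Matrix.mul_assoc, nonsing_inv_mul _ hP, Matrix.one_mul]
  rw [← add_mulVec, Matrix.mul_sub, Matrix.sub_mul, hconj, add_sub_cancel, mulVec_mulVec,
    mulVec_mulVec, Matrix.mul_assoc (P⁻¹ * A), mul_nonsing_inv _ hP, Matrix.mul_one]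

theorem norm_le_gronwallBound_of_hasDerivWithinAt_diagonal_add [Nonempty ι] [DecidableEq ι]
    {y g : ℝ → ι → ℝ} {B : ℝ → Matrix ι ι ℝ} {lam : ι → ℝ} {L h ε a b : ℝ}
    (hy : ∀ s ∈ Icc a b,
      HasDerivWithinAt y (diagonal lam *ᵥ y s + (B s *ᵥ y s - g s)) (Icc a b) s)
    (hya : y a = 0) (hB : ContinuousOn B (Icc a b)) (hg : ContinuousOn g (Icc a b))
    (hlam : ∀ i, lam i ≤ L) (hh : 0 ≤ h) (hBh : ∀ s ∈ Icc a b, ∀ i j, |B s i j| ≤ h)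
    (hgε : ∀ s ∈ Icc a b, ∀ i, |g s i| ≤ ε) :
    ∀ t ∈ Icc a b, ‖y t‖ ≤ gronwallBound 0 (L + Fintype.card ι * h) ε (t - a) := by
  set c : ℝ := Fintype.card ι * h
  have hyc : ContinuousOn y (Icc a b) := fun s hs => (hy s hs).continuousWithinAt
  have hf : ContinuousOn (fun s => B s *ᵥ y s - g s) (Icc a b) :=
    ((continuous_fst.matrix_mulVec continuous_snd).comp_continuousOn (hB.prodMk hyc)).sub hg
  have hf_le : ∀ s ∈ Icc a b, ∀ i, |(B s *ᵥ y s - g s) i| ≤ c * ‖y s‖ + ε := fun s hs i =>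
    (abs_sub _ _).trans
      (add_le_add (abs_mulVec_apply_le_card_mul (hBh s hs i) (y s)) (hgε s hs i))
  have hyi : ∀ i, ∀ s ∈ Icc a b,
      HasDerivWithinAt (fun s => y s i) (lam i * y s i + (B s *ᵥ y s - g s) i) (Icc a b) s :=
    fun i s hs => by simpa [mulVec_diagonal] using hasDerivWithinAt_pi.1 (hy s hs) i
  refine le_gronwallBound_of_le_integral_exp_mul (by positivity) hyc.norm fun t ht => ?_
  refine (pi_norm_le_iff_of_nonempty _).2 fun i => ?_
  exact abs_le_integral_exp_mul_of_hasDerivWithinAt (hyi i)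
    ((continuous_apply i).comp_continuousOn hf)
    ((continuousOn_const.mul hyc.norm).add continuousOn_const) (congrFun hya i) (hlam i)
    (fun s hs => hf_le s hs i) ht

end

theorem global_error_bound_general (n : ℕ) (hn : 0 < n) (t_m : ℝ)
    (A : ℝ → Matrix (Fin n) (Fin n) ℝ) (δ : ℝ → Fin n → ℝ)
    (hA : ContinuousOn A (Set.Icc 0 t_m))
    (hδcont : ContinuousOn δ (Set.Icc 0 t_m))
    (Δx : ℝ → Fin n → ℝ)
    (hΔx0 : Δx 0 = 0)
    (hΔx : ∀ t ∈ Set.Icc 0 t_m,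
      HasDerivWithinAt Δx (A t *ᵥ Δx t - δ t) (Set.Icc 0 t_m) t)
    (A₀ P : Matrix (Fin n) (Fin n) ℝ)
    (hP : IsUnit P.det)
    (lam : Fin n → ℝ) (hlam : Antitone lam)
    (hdiag : A₀ = P * Matrix.diagonal lam * P⁻¹)
    (h_max δ_max : ℝ) (hh : 0 ≤ h_max)
    (hB : ∀ t ∈ Set.Icc 0 t_m, ∀ i j, |(P⁻¹ * (A t - A₀) * P) i j| ≤ h_max)
    (hg : ∀ t ∈ Set.Icc 0 t_m, ∀ i, |(P⁻¹ *ᵥ δ t) i| ≤ δ_max)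
    (hne : lam ⟨0, hn⟩ + n * h_max ≠ 0) :
    ∀ t ∈ Set.Icc 0 t_m,
      ‖Δx t‖ ≤
        (⨆ i : Fin n, ∑ j : Fin n, |P i j|) *
          (δ_max / (lam ⟨0, hn⟩ + n * h_max)) *
            (Real.exp ((lam ⟨0, hn⟩ + n * h_max) * t) - 1) := by
  have : Nonempty (Fin n) := ⟨⟨0, hn⟩⟩
  have hy : ∀ s ∈ Icc 0 t_m, HasDerivWithinAt (fun s => P⁻¹ *ᵥ Δx s)
      (diagonal lam *ᵥ (P⁻¹ *ᵥ Δx s) +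
        ((P⁻¹ * (A s - A₀) * P) *ᵥ (P⁻¹ *ᵥ Δx s) - P⁻¹ *ᵥ δ s)) (Icc 0 t_m) s := fun s hs => by
    simpa only [mulVec_sub, inv_mulVec_mulVec_eq_diagonal_add hP hdiag, add_sub_assoc]
      using (hΔx s hs).const_mulVec P⁻¹
  have hbound := norm_le_gronwallBound_of_hasDerivWithinAt_diagonal_add hy (by simp [hΔx0])
    ((continuousOn_const.mul (hA.sub continuousOn_const)).mul continuousOn_const)
    ((continuous_const.matrix_mulVec continuous_id).comp_continuousOn hδcont)
    (fun i => hlam (show (⟨0, hn⟩ : Fin n) ≤ i from Nat.zero_le _)) hh hB hg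
  intro t ht
  calc ‖Δx t‖ = ‖P *ᵥ (P⁻¹ *ᵥ Δx t)‖ := by
        rw [mulVec_mulVec, mul_nonsing_inv _ hP, one_mulVec]
    _ ≤ (⨆ i, ∑ j, |P i j|) * ‖P⁻¹ *ᵥ Δx t‖ := norm_mulVec_le_iSup_sum_abs_mul_norm P _
    _ ≤ (⨆ i, ∑ j, |P i j|) * gronwallBound 0 (lam ⟨0, hn⟩ + n * h_max) δ_max t := by
        refine mul_le_mul_of_nonneg_left ?_
          (Real.iSup_nonneg fun i => Finset.sum_nonneg fun j _ => abs_nonneg _)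
        simpa using hbound t ht
    _ = _ := by rw [gronwallBound_of_K_ne_0 hne]; ring

/-- **Main theorem (Theorem 3.3): global forward-error bound.**
Let `Δx' t = A t *ᵥ Δx t - δ t` on `[0, t_m]` with `Δx 0 = 0`, where `A` and `δ`
are continuous on `[0, t_m]`.  Let `A₀ = A 0 = P * Σ * P⁻¹` with `P` invertible and
`Σ` diagonal with diagonal entries `λ 0 ≥ λ 1 ≥ … ≥ λ (n-1)`.  If
`|(P⁻¹ * (A t - A₀) * P) i j| ≤ h_max` and `|(P⁻¹ *ᵥ δ t) i| ≤ δ_max` on `[0, t_m]`,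
and `λ 0 + n * h_max ≠ 0`, then for all `t ∈ [0, t_m]`,
`‖Δx t‖_∞ ≤ ‖P‖_∞ * (δ_max / (λ 0 + n * h_max)) * (exp ((λ 0 + n * h_max) * t) - 1)`,
where `‖Δx t‖_∞ = max_i |Δx t i|` (the Pi sup norm) and `‖P‖_∞` is the maximum
absolute row sum of `P`. -/
theorem global_error_bound (n : ℕ) (hn : 0 < n) (t_m : ℝ) (ht_m : 0 < t_m)
    (A : ℝ → Matrix (Fin n) (Fin n) ℝ) (δ : ℝ → Fin n → ℝ)
    (hA : ContinuousOn A (Set.Icc 0 t_m))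
    (hδcont : ContinuousOn δ (Set.Icc 0 t_m))
    (Δx : ℝ → Fin n → ℝ)
    (hΔx0 : Δx 0 = 0)
    (hΔx : ∀ t ∈ Set.Icc 0 t_m,
      HasDerivWithinAt Δx (A t *ᵥ Δx t - δ t) (Set.Icc 0 t_m) t)
    (A₀ P : Matrix (Fin n) (Fin n) ℝ) (hA₀ : A₀ = A 0)
    (hP : IsUnit P.det)
    (lam : Fin n → ℝ) (hlam : Antitone lam)
    (hdiag : A₀ = P * Matrix.diagonal lam * P⁻¹)
    (h_max δ_max : ℝ) (hh : 0 ≤ h_max) (hd : 0 ≤ δ_max)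
    (hB : ∀ t ∈ Set.Icc 0 t_m, ∀ i j, |(P⁻¹ * (A t - A₀) * P) i j| ≤ h_max)
    (hg : ∀ t ∈ Set.Icc 0 t_m, ∀ i, |(P⁻¹ *ᵥ δ t) i| ≤ δ_max)
    (hne : lam ⟨0, hn⟩ + n * h_max ≠ 0) :
    ∀ t ∈ Set.Icc 0 t_m,
      ‖Δx t‖ ≤
        (⨆ i : Fin n, ∑ j : Fin n, |P i j|) *
          (δ_max / (lam ⟨0, hn⟩ + n * h_max)) *
            (Real.exp ((lam ⟨0, hn⟩ + n * h_max) * t) - 1) :=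
  global_error_bound_general n hn t_m A δ hA hδcont Δx hΔx0 hΔx A₀ P hP lam hlam hdiag h_max δ_max
    hh hB hg hne
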